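/- With I_{i,j}(h) = ∫_{Γ_h^+} x^{i-4} y^j dx, for all integers i, j ≥ 0 and h ∈ (-1,0): (2i + 3j - 6)·h·I_{i,j}(h) = (2i + j - 10)·I_{i-2,j}(h) - 4(i + j - 4)·I_{i-1,j}(h). -/

import Mathlib

/-- The y-coordinate of the upper branch of the level curve H = h. -/
noncomputable def yy (h x : ℝ) : ℝ := Real.sqrt (2*h*x^3 + 4*x^2 - 2*x)

/-- Left endpoint of the upper branch of the level curve H = h. -/
noncomputable def xl (h : ℝ) : ℝ := (1 - Real.sqrt (1 + h)) / (-h)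

/-- Right endpoint of the upper branch of the level curve H = h. -/
noncomputable def xr (h : ℝ) : ℝ := (1 + Real.sqrt (1 + h)) / (-h)

/-- I_{i,j}(h) = ∫ over Γ_h⁺ of x^{i-4} y^j dx, over the upper branch. -/
noncomputable def Iint (i : ℤ) (j : ℕ) (h : ℝ) : ℝ :=
  ∫ x in xl h..xr h, x ^ (i - 4) * yy h x ^ j

/-!
`xl h` and `xr h` are the positive roots of `P(x) = 2hx³ + 4x² - 2x`, and `y = yy h = √P`. Hence
`F(x) = x^(i-6) · √P^(j+2)` vanishes at both ends of `[xl h, xr h]`, and writing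
`√P^(j+2) = √P^j · P` its derivative is `x^(i-7) √P^j ((i-6) P + (j+2)/2 · x P')`, which expands to
`(2i+3j-6) h x^(i-4) y^j + 4(i+j-4) x^(i-5) y^j - (2i+j-10) x^(i-6) y^j`.
Integrating this over `[xl h, xr h]` gives zero, which is the recurrence.
-/

open Set intervalIntegral

theorem HasDerivAt.sqrt_pow_add_two {f : ℝ → ℝ} {f' x : ℝ} (hf : HasDerivAt f f' x)
    (hx : 0 < f x) (n : ℕ) :
    HasDerivAt (fun y => √(f y) ^ (n + 2)) ((n + 2) / 2 * √(f x) ^ n * f') x := by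
  have hs : 0 < √(f x) := Real.sqrt_pos.mpr hx
  refine ((hf.sqrt hx.ne').pow (n + 2)).congr_deriv ?_
  rw [show n + 2 - 1 = n + 1 by omega, pow_succ]
  push_cast
  field_simp

section LevelCurve

variable {h : ℝ}

theorem xl_pos (h0 : h < 0) : 0 < xl h := by
  have : √(1 + h) < 1 := (Real.sqrt_lt' one_pos).mpr (by linarith)
  exact div_pos (by linarith) (by linarith)

theorem xl_lt_xr (hh : h ∈ Ioo (-1) 0) : xl h < xr h := by
  have : 0 < √(1 + h) := Real.sqrt_pos.mpr (by linarith [hh.1])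
  exact div_lt_div_of_pos_right (by linarith) (by linarith [hh.2])

theorem cubic_eq_mul_sub_mul_sub (h1 : -1 ≤ h) (h0 : h ≠ 0) (x : ℝ) :
    2*h*x^3 + 4*x^2 - 2*x = -2 * h * x * (x - xl h) * (xr h - x) := by
  have hs : √(1 + h) ^ 2 = 1 + h := Real.sq_sqrt (by linarith)
  have hsum : h * (xl h + xr h) = -2 := by
    simp only [xl, xr]; field_simp; ring
  have hprod : h * (xl h * xr h) = -1 := by
    simp only [xl, xr]; field_simp; linear_combination (-1) * hs
  linear_combination (2 * x ^ 2) * hsum - (2 * x) * hprod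

theorem yy_xl (h1 : -1 ≤ h) (h0 : h ≠ 0) : yy h (xl h) = 0 := by
  rw [yy, cubic_eq_mul_sub_mul_sub h1 h0, sub_self, mul_zero, zero_mul, Real.sqrt_zero]

theorem yy_xr (h1 : -1 ≤ h) (h0 : h ≠ 0) : yy h (xr h) = 0 := by
  rw [yy, cubic_eq_mul_sub_mul_sub h1 h0, sub_self, mul_zero, Real.sqrt_zero]

theorem cubic_pos_of_mem_Ioo (hh : h ∈ Ioo (-1) 0) {x : ℝ} (hx : x ∈ Ioo (xl h) (xr h)) :
    0 < 2*h*x^3 + 4*x^2 - 2*x := by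
  have hx0 : 0 < x := (xl_pos hh.2).trans hx.1
  rw [cubic_eq_mul_sub_mul_sub hh.1.le hh.2.ne]
  have : 0 < x - xl h := sub_pos.mpr hx.1
  have : 0 < xr h - x := sub_pos.mpr hx.2
  have : 0 < -2 * h := by linarith [hh.2]
  positivity

theorem continuousOn_zpow_mul_yy_pow (h0 : h < 0) (k : ℤ) (j : ℕ) :
    ContinuousOn (fun x => x ^ k * yy h x ^ j) (Icc (xl h) (xr h)) := by
  refine ((continuousOn_zpow₀ k).mono fun x hx => ?_).mul (by unfold yy; fun_prop)
  exact ((xl_pos h0).trans_le hx.1).ne'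

theorem intervalIntegrable_zpow_mul_yy_pow (hh : h ∈ Ioo (-1) 0) (k : ℤ) (j : ℕ) :
    IntervalIntegrable (fun x => x ^ k * yy h x ^ j) MeasureTheory.volume (xl h) (xr h) :=
  ContinuousOn.intervalIntegrable <| by
    rw [uIcc_of_le (xl_lt_xr hh).le]; exact continuousOn_zpow_mul_yy_pow hh.2 k j

end LevelCurve

theorem hasDerivAt_zpow_mul_yy_pow (i : ℤ) (j : ℕ) {h x : ℝ} (hx : 0 < x)
    (hP : 0 < 2*h*x^3 + 4*x^2 - 2*x) :
    HasDerivAt (fun x => x ^ (i - 6) * yy h x ^ (j + 2))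
      ((2*i + 3*j - 6) * h * (x ^ (i - 4) * yy h x ^ j)
        + 4 * (i + j - 4) * (x ^ (i - 5) * yy h x ^ j)
        - (2*i + j - 10) * (x ^ (i - 6) * yy h x ^ j)) x := by
  have hP' : HasDerivAt (fun x : ℝ => 2*h*x^3 + 4*x^2 - 2*x) (6*h*x^2 + 8*x - 2) x := by
    refine ((((hasDerivAt_pow 3 x).const_mul (2*h)).add
      ((hasDerivAt_pow 2 x).const_mul 4)).sub ((hasDerivAt_id' x).const_mul 2)).congr_deriv ?_
    push_cast; ring
  have hzpow : HasDerivAt (fun x : ℝ => x ^ (i - 6)) ((i - 6) * x ^ (i - 6 - 1)) x := by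
    simpa using hasDerivAt_zpow (i - 6) x (Or.inl hx.ne')
  refine (hzpow.mul (hP'.sqrt_pow_add_two hP j)).congr_deriv ?_
  have hy : yy h x ^ (j + 2) = yy h x ^ j * (2*h*x^3 + 4*x^2 - 2*x) := by
    rw [pow_add, yy, Real.sq_sqrt hP.le]
  have hzpow_add (n : ℕ) : x ^ (i - 7 + n) = x ^ (i - 7) * x ^ n := by
    rw [zpow_add₀ hx.ne', zpow_natCast]
  rw [← yy, hy, show i - 6 - 1 = i - 7 by ring, show i - 6 = i - 7 + (1 : ℕ) by push_cast; ring,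
    show i - 5 = i - 7 + (2 : ℕ) by push_cast; ring, show i - 4 = i - 7 + (3 : ℕ) by push_cast; ring,
    hzpow_add, hzpow_add, hzpow_add]
  ring

theorem integral_combination_eq_zero (i : ℤ) (j : ℕ) {h : ℝ} (hh : h ∈ Ioo (-1) 0) :
    ∫ x in xl h..xr h, ((2*i + 3*j - 6) * h * (x ^ (i - 4) * yy h x ^ j)
        + 4 * (i + j - 4) * (x ^ (i - 5) * yy h x ^ j)
        - (2*i + j - 10) * (x ^ (i - 6) * yy h x ^ j)) = 0 := by
  have hint := intervalIntegrable_zpow_mul_yy_pow hh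
  rw [integral_eq_sub_of_hasDerivAt_of_le (xl_lt_xr hh).le
    (continuousOn_zpow_mul_yy_pow hh.2 (i - 6) (j + 2))
    (fun x hx => hasDerivAt_zpow_mul_yy_pow i j ((xl_pos hh.2).trans hx.1)
      (cubic_pos_of_mem_Ioo hh hx))
    ((((hint _ j).const_mul _).add ((hint _ j).const_mul _)).sub ((hint _ j).const_mul _)),
    yy_xl hh.1.le hh.2.ne, yy_xr hh.1.le hh.2.ne]
  simp

/-- For all integers i, naturals j, and h ∈ (-1,0):
(2i + 3j - 6)·h·I_{i,j}(h) = (2i + j - 10)·I_{i-2,j}(h) - 4(i + j - 4)·I_{i-1,j}(h). -/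
theorem Iint_recurrence_three (i : ℤ) (j : ℕ) (h : ℝ) (hh : h ∈ Set.Ioo (-1 : ℝ) 0) :
    ((2*i + 3*(j : ℤ) - 6 : ℤ) : ℝ) * h * Iint i j h
      = ((2*i + (j : ℤ) - 10 : ℤ) : ℝ) * Iint (i-2) j h
        - 4 * ((i + (j : ℤ) - 4 : ℤ) : ℝ) * Iint (i-1) j h := by
  have hint := intervalIntegrable_zpow_mul_yy_pow hh
  have hzero := integral_combination_eq_zero i j hh
  rw [integral_sub (((hint _ j).const_mul _).add ((hint _ j).const_mul _)) ((hint _ j).const_mul _),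
    integral_add ((hint _ j).const_mul _) ((hint _ j).const_mul _),
    integral_const_mul, integral_const_mul, integral_const_mul] at hzero
  simp only [Iint, show i - 1 - 4 = i - 5 by ring, show i - 2 - 4 = i - 6 by ring]
  push_cast
  linear_combination hzero
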